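/- arXiv:2012.11032 — 7 statements merged into one kernel-verified Lean document; each statement's English description precedes it below -/
import Mathlib

section
/- Let V be a real unital Banach algebra, v ∈ V, and q ∈ ℍ with |q| > ‖v‖. Then v² - 2Re(q)v + |q|²·1 is invertible in V, and its inverse is the absolutely convergent series ∑ₙ vⁿ aₙ where aₙ = |q|^{-2n-2} ∑_{h=0}^{n} q^h conj(q)^{n-h} (the coefficients aₙ are real numbers). -/
open scoped Quaternion

lemma sPencil_abs_re_le_norm (x : ℍ[ℝ]) : |x.re| ≤ ‖x‖ := by
  have h1 : ‖x‖ = Real.sqrt (Quaternion.normSq x) := by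
    rw [norm_eq_sqrt_real_inner x, Quaternion.inner_self]
  rw [h1, Quaternion.normSq_def', ← Real.sqrt_sq_eq_abs]
  apply Real.sqrt_le_sqrt
  nlinarith [sq_nonneg x.imI, sq_nonneg x.imJ, sq_nonneg x.imK]

theorem sPencil_invertible_of_norm_lt {V : Type*} [NormedRing V] [NormedAlgebra ℝ V]
    [CompleteSpace V] (v : V) (q : ℍ[ℝ]) (hq : ‖v‖ < ‖q‖) :
    let a : ℕ → ℝ := fun n =>
      ‖q‖ ^ (-(2 * (n : ℤ)) - 2) * (∑ h ∈ Finset.range (n + 1), q ^ h * (star q) ^ (n - h)).re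
    Summable (fun n => ‖a n • v ^ n‖) ∧
    IsUnit (v ^ 2 - (2 * q.re) • v + (‖q‖ ^ 2) • (1 : V)) ∧
    (v ^ 2 - (2 * q.re) • v + (‖q‖ ^ 2) • (1 : V)) * (∑' n, a n • v ^ n) = 1 ∧
    (∑' n, a n • v ^ n) * (v ^ 2 - (2 * q.re) • v + (‖q‖ ^ 2) • (1 : V)) = 1 := by
  intro a
  classical
  set r : ℝ := ‖q‖ with hr_def
  have hr : 0 < r := lt_of_le_of_lt (norm_nonneg v) hq
  have hrne : r ≠ 0 := ne_of_gt hr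
  set A : ℕ → ℍ[ℝ] := fun n => ∑ h ∈ Finset.range (n + 1), q ^ h * (star q) ^ (n - h) with hA
  -- expression for a
  have ha_eq : ∀ n, a n = (A n).re / r ^ (2 * n + 2) := by
    intro n
    show r ^ (-(2 * (n : ℤ)) - 2) * (A n).re = _
    rw [div_eq_inv_mul, ← zpow_natCast r (2 * n + 2), ← zpow_neg]
    congr 2
    push_cast
    ring
  -- one step recurrence for A
  have hAstep : ∀ n, A (n + 1) = q * A n + (star q) ^ (n + 1) := by
    intro n
    show ∑ h ∈ Finset.range (n + 1 + 1), q ^ h * (star q) ^ (n + 1 - h) = _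
    rw [Finset.sum_range_succ']
    simp only [pow_zero, one_mul, Nat.sub_zero]
    rw [hA, Finset.mul_sum]
    congr 1
    apply Finset.sum_congr rfl
    intro h hh
    simp only [Finset.mem_range] at hh
    have h1 : n + 1 - (h + 1) = n - h := by omega
    rw [h1, pow_succ', mul_assoc]
  have hcomm : star q * q = q * star q := by
    rw [Quaternion.self_mul_star, Quaternion.star_mul_self]
  have hArec : ∀ n, A (n + 2) = (q + star q) * A (n + 1) - (q * star q) * A n := by
    intro n
    have h1 : A (n + 2) = q * A (n + 1) + (star q) ^ (n + 2) := hAstep (n + 1)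
    have h2 : star q * A (n + 1) = (q * star q) * A n + (star q) ^ (n + 2) := by
      rw [hAstep n, mul_add, ← mul_assoc, hcomm, ← pow_succ']
    rw [add_mul, h2, h1]
    abel
  have hq2 : q + star q = ((2 * q.re : ℝ) : ℍ[ℝ]) := Quaternion.self_add_star' q
  have hq3 : q * star q = ((r ^ 2 : ℝ) : ℍ[ℝ]) := by
    rw [Quaternion.self_mul_star]
    congr 1
    rw [Quaternion.normSq_eq_norm_mul_self, sq, hr_def]
  have hre : ∀ n, (A (n + 2)).re = 2 * q.re * (A (n + 1)).re - r ^ 2 * (A n).re := by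
    intro n
    rw [hArec n, hq2, hq3, Quaternion.coe_mul_eq_smul, Quaternion.coe_mul_eq_smul]
    simp [Quaternion.re_sub, Quaternion.re_smul, smul_eq_mul]
  have hA0 : (A 0).re = 1 := by simp [hA]
  have hA1 : (A 1).re = 2 * q.re := by
    simp [hA, Finset.sum_range_succ]
    ring
  -- scalar recurrences for a
  have key0 : r ^ 2 * a 0 = 1 := by
    rw [ha_eq, hA0]
    norm_num
    field_simp
  have key1 : r ^ 2 * a 1 = 2 * q.re * a 0 := by
    rw [ha_eq, ha_eq, hA0, hA1]
    norm_num
    field_simp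
  have key : ∀ n, r ^ 2 * a (n + 2) = 2 * q.re * a (n + 1) - a n := by
    intro n
    rw [ha_eq, ha_eq, ha_eq, hre n]
    have e1 : 2 * (n + 2) + 2 = (2 * n + 2) + 4 := by ring
    have e2 : 2 * (n + 1) + 2 = (2 * n + 2) + 2 := by ring
    rw [e1, e2, pow_add, pow_add]
    field_simp
    ring
  -- norm bound on A
  have hAnorm : ∀ n, ‖A n‖ ≤ ((n : ℝ) + 1) * r ^ n := by
    intro n
    calc ‖A n‖ ≤ ∑ h ∈ Finset.range (n + 1), ‖q ^ h * (star q) ^ (n - h)‖ :=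
          norm_sum_le _ _
      _ = ∑ _h ∈ Finset.range (n + 1), r ^ n := by
          apply Finset.sum_congr rfl
          intro h hh
          simp only [Finset.mem_range] at hh
          rw [norm_mul, norm_pow, norm_pow, Quaternion.norm_star, ← hr_def, ← pow_add]
          congr 1
          omega
      _ = ((n : ℝ) + 1) * r ^ n := by
          rw [Finset.sum_const, Finset.card_range]
          push_cast
          ring
  set t : ℝ := ‖v‖ / r with ht_def
  have ht0 : 0 ≤ t := div_nonneg (norm_nonneg v) hr.le
  have ht1 : t < 1 := (div_lt_one hr).2 hq
  obtain ⟨C, hC0, hCv⟩ : ∃ C : ℝ, 0 ≤ C ∧ ∀ n, ‖v ^ n‖ ≤ C * ‖v‖ ^ n := by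
    refine ⟨max ‖(1 : V)‖ 1, le_max_of_le_right zero_le_one, ?_⟩
    intro n
    induction n with
    | zero => simpa using le_max_left _ _
    | succ n ih =>
      calc ‖v ^ (n + 1)‖ = ‖v * v ^ n‖ := by rw [pow_succ']
        _ ≤ ‖v‖ * ‖v ^ n‖ := norm_mul_le _ _
        _ ≤ ‖v‖ * (max ‖(1 : V)‖ 1 * ‖v‖ ^ n) :=
            mul_le_mul_of_nonneg_left ih (norm_nonneg v)
        _ = max ‖(1 : V)‖ 1 * ‖v‖ ^ (n + 1) := by ring
  have hbound : ∀ n : ℕ, ‖a n • v ^ n‖ ≤ C / r ^ 2 * (((n : ℝ) + 1) * t ^ n) := by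
    intro n
    have h2 : |a n| ≤ ((n : ℝ) + 1) * r ^ n / r ^ (2 * n + 2) := by
      rw [ha_eq, abs_div, abs_of_pos (pow_pos hr _)]
      exact div_le_div_of_nonneg_right ((sPencil_abs_re_le_norm _).trans (hAnorm n))
        (pow_pos hr _).le
    have h3 : ((n : ℝ) + 1) * r ^ n / r ^ (2 * n + 2) * (C * ‖v‖ ^ n)
        = C / r ^ 2 * (((n : ℝ) + 1) * t ^ n) := by
      rw [ht_def, div_pow, show 2 * n + 2 = n + n + 2 by ring, pow_add, pow_add]
      field_simp
    calc ‖a n • v ^ n‖ = |a n| * ‖v ^ n‖ := by rw [norm_smul, Real.norm_eq_abs]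
      _ ≤ (((n : ℝ) + 1) * r ^ n / r ^ (2 * n + 2)) * (C * ‖v‖ ^ n) := by
          apply mul_le_mul h2 (hCv n) (norm_nonneg _)
          positivity
      _ = C / r ^ 2 * (((n : ℝ) + 1) * t ^ n) := h3
  have hsg : Summable (fun n : ℕ => C / r ^ 2 * (((n : ℝ) + 1) * t ^ n)) := by
    apply Summable.mul_left
    have h1 : Summable (fun n : ℕ => (n : ℝ) * t ^ n) := by
      have := summable_pow_mul_geometric_of_norm_lt_one (R := ℝ) 1
        (by rwa [Real.norm_eq_abs, abs_of_nonneg ht0] : ‖t‖ < 1)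
      simpa using this
    have h2 : Summable (fun n : ℕ => t ^ n) := summable_geometric_of_lt_one ht0 ht1
    exact (h1.add h2).congr (fun n => by ring)
  have hnormsum : Summable (fun n => ‖a n • v ^ n‖) :=
    Summable.of_nonneg_of_le (fun n => norm_nonneg _) hbound hsg
  have hsum : Summable (fun n => a n • v ^ n) := hnormsum.of_norm
  -- the pencil
  set P : V := v ^ 2 - (2 * q.re) • v + (r ^ 2) • (1 : V) with hP
  set b : ℕ → V := fun n => a n • v ^ n with hb
  have hvpow2 : ∀ n : ℕ, v ^ 2 * v ^ n = v ^ (n + 2) := fun n => by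
    rw [← pow_add, Nat.add_comm]
  have hvpow1 : ∀ n : ℕ, v * v ^ n = v ^ (n + 1) := fun n => (pow_succ' v n).symm
  have hRHS : ∀ n, P * b n
      = a n • v ^ (n + 2) - (2 * q.re * a n) • v ^ (n + 1) + (r ^ 2 * a n) • v ^ n := by
    intro n
    show (v ^ 2 - (2 * q.re) • v + (r ^ 2) • (1 : V)) * (a n • v ^ n) = _
    simp only [sub_mul, add_mul, smul_mul_assoc, mul_smul_comm, one_mul]
    rw [hvpow2 n, hvpow1 n]
    module
  have hRHS' : ∀ n, b n * P
      = a n • v ^ (n + 2) - (2 * q.re * a n) • v ^ (n + 1) + (r ^ 2 * a n) • v ^ n := by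
    intro n
    show (a n • v ^ n) * (v ^ 2 - (2 * q.re) • v + (r ^ 2) • (1 : V)) = _
    simp only [mul_sub, mul_add, smul_mul_assoc, mul_smul_comm, mul_one,
      ← pow_add, ← pow_succ]
    module
  -- summability of the three series
  have s2 : Summable (fun n => a n • v ^ (n + 2)) :=
    (hsum.mul_right (v ^ 2)).congr fun n => by
      rw [smul_mul_assoc, ← pow_add]
  have s1 : Summable (fun n => (2 * q.re * a n) • v ^ (n + 1)) :=
    ((hsum.mul_right v).const_smul (2 * q.re)).congr fun n => by
      rw [smul_mul_assoc, ← pow_succ, smul_smul]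
  have s0 : Summable (fun n => (r ^ 2 * a n) • v ^ n) :=
    (hsum.const_smul (r ^ 2)).congr fun n => by rw [smul_smul]
  -- shifted versions
  set F2 : ℕ → V := fun n => if 2 ≤ n then a (n - 2) • v ^ n else 0 with hF2
  set F1 : ℕ → V := fun n => if 1 ≤ n then (2 * q.re * a (n - 1)) • v ^ n else 0 with hF1
  have hi2 : Function.Injective (fun n : ℕ => n + 2) := fun x y h => by simpa using h
  have hi1 : Function.Injective (fun n : ℕ => n + 1) := fun x y h => by simpa using h
  have hz2 : ∀ x ∉ Set.range (fun n : ℕ => n + 2), F2 x = 0 := by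
    intro x hx
    have : ¬ 2 ≤ x := by
      intro h
      exact hx ⟨x - 2, show x - 2 + 2 = x by omega⟩
    simp [hF2, this]
  have hz1 : ∀ x ∉ Set.range (fun n : ℕ => n + 1), F1 x = 0 := by
    intro x hx
    have : ¬ 1 ≤ x := by
      intro h
      exact hx ⟨x - 1, show x - 1 + 1 = x by omega⟩
    simp [hF1, this]
  have hcomp2 : ∀ n, F2 (n + 2) = a n • v ^ (n + 2) := by intro n; simp [hF2]
  have hcomp1 : ∀ n, F1 (n + 1) = (2 * q.re * a n) • v ^ (n + 1) := by intro n; simp [hF1]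
  have ht2 : ∑' n, a n • v ^ (n + 2) = ∑' n, F2 n := by
    rw [← hi2.tsum_eq (Function.support_subset_iff'.2 hz2)]
    exact tsum_congr fun n => (hcomp2 n).symm
  have ht1' : ∑' n, (2 * q.re * a n) • v ^ (n + 1) = ∑' n, F1 n := by
    rw [← hi1.tsum_eq (Function.support_subset_iff'.2 hz1)]
    exact tsum_congr fun n => (hcomp1 n).symm
  have sF2 : Summable F2 :=
    (hi2.summable_iff hz2).1 (s2.congr fun n => (hcomp2 n).symm)
  have sF1 : Summable F1 :=
    (hi1.summable_iff hz1).1 (s1.congr fun n => (hcomp1 n).symm)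
  -- the key telescoping computation
  have hT : ∑' n, (a n • v ^ (n + 2) - (2 * q.re * a n) • v ^ (n + 1)
      + (r ^ 2 * a n) • v ^ n) = 1 := by
    rw [Summable.tsum_add (s2.sub s1) s0, Summable.tsum_sub s2 s1, ht2, ht1',
      ← Summable.tsum_sub sF2 sF1, ← Summable.tsum_add (sF2.sub sF1) s0]
    have hpt : ∀ n, F2 n - F1 n + (r ^ 2 * a n) • v ^ n = if n = 0 then (1 : V) else 0 := by
      intro n
      match n with
      | 0 => simp [hF2, hF1, key0]
      | 1 =>
        have h2 : ¬ (2 : ℕ) ≤ 1 := by omega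
        simp only [hF2, hF1, if_neg h2, if_pos (le_refl 1), zero_sub]
        rw [key1]
        simp
      | (m + 2) =>
        have h2 : (2 : ℕ) ≤ m + 2 := by omega
        have h1 : (1 : ℕ) ≤ m + 2 := by omega
        simp only [hF2, hF1, if_pos h2, if_pos h1, Nat.add_sub_cancel,
          show m + 2 - 1 = m + 1 by omega]
        rw [key m, ← sub_smul, ← add_smul]
        have hc : a m - 2 * q.re * a (m + 1) + (2 * q.re * a (m + 1) - a m) = 0 := by ring
        rw [hc, zero_smul]
        simp
    calc ∑' n, (F2 n - F1 n + (r ^ 2 * a n) • v ^ n)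
        = ∑' n : ℕ, (if n = 0 then (1 : V) else 0) := tsum_congr hpt
      _ = 1 := tsum_ite_eq 0 1
  have hPS : P * (∑' n, b n) = 1 := by
    rw [← hsum.tsum_mul_left P]
    rw [tsum_congr hRHS]
    exact hT
  have hSP : (∑' n, b n) * P = 1 := by
    rw [← hsum.tsum_mul_right P]
    rw [tsum_congr hRHS']
    exact hT
  exact ⟨hnormsum, ⟨⟨P, ∑' n, b n, hPS, hSP⟩, rfl⟩, hPS, hSP⟩
end

section
/- Let A : V → W be a unital algebra homomorphism between real unital Banach algebras, and define Pr(Φ_A) = {p ∈ V : p + t is Fredholm relative to A for every t Fredholm relative to A}, where v is Fredholm relative to A when A(v) is invertible. Then for every p ∈ Pr(Φ_A) and every nonzero quaternion q, the element p² - 2Re(q)p + |q|²·1 is Fredholm relative to A; i.e., the Fredholm S-spectrum of p is contained in {0}. -/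
open scoped Quaternion

private lemma isUnit_smul_iff' {W : Type*} [Ring W] [Algebra ℝ W] {m : ℝ} (hm : m ≠ 0)
    (x : W) : IsUnit (m • x) ↔ IsUnit x := by
  rw [Algebra.smul_def]
  have hu : IsUnit (algebraMap ℝ W m) := (isUnit_iff_ne_zero.mpr hm).map (algebraMap ℝ W)
  rw [← hu.unit_spec]
  exact Units.isUnit_units_mul hu.unit x

theorem fredholm_sSpectrum_of_perturbation {V W : Type*}
    [NormedRing V] [NormedAlgebra ℝ V] [NormedRing W] [NormedAlgebra ℝ W]
    (A : V →ₐ[ℝ] W) (p : V)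
    (hp : ∀ t : V, IsUnit (A t) → IsUnit (A (p + t))) :
    ∀ q : ℍ[ℝ], q ≠ 0 →
      IsUnit (A (p ^ 2 - (2 * q.re) • p + (‖q‖ ^ 2) • (1 : V))) := by
  intro q hq
  have hsc : ∀ c : ℝ, c ≠ 0 → IsUnit (A (p + c • (1 : V))) := by
    intro c hc
    apply hp
    rw [map_smul, map_one]
    exact (isUnit_smul_iff' hc 1).mpr isUnit_one
  set r : ℝ := q.re with hr
  set s : ℝ := ‖q‖ ^ 2 with hsdef
  have hs : 0 < s := by
    have h : ‖q‖ ≠ 0 := norm_ne_zero_iff.mpr hq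
    positivity
  clear_value r s
  clear hr hsdef hq
  -- choose a small positive m making the discriminant nonnegative
  obtain ⟨m, hm, hD⟩ : ∃ m : ℝ, 0 < m ∧ 0 ≤ (1 + 2 * r * m) ^ 2 - 4 * s * m ^ 2 := by
    set K : ℝ := 1 + |r| + s with hKdef
    have hK : 0 < K := by positivity
    refine ⟨1 / (4 * K), by positivity, ?_⟩
    have hexp : (1 + 2 * r * (1 / (4 * K))) ^ 2 - 4 * s * (1 / (4 * K)) ^ 2
        = ((2 * K + r) ^ 2 - s) / (4 * K ^ 2) := by
      field_simp
      ring
    rw [hexp]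
    apply div_nonneg _ (by positivity)
    have h2 : -|r| ≤ r := neg_abs_le r
    have h5 : 1 + s ≤ 2 * K + r := by
      rw [hKdef]; linarith
    nlinarith [hs, h5, sq_nonneg (1 + s)]
  have hmne : m ≠ 0 := ne_of_gt hm
  -- choose the two real roots
  obtain ⟨c, d, hsum, hprod, hc, hd⟩ :
      ∃ c d : ℝ, m * (c + d) = -(1 + 2 * r * m) ∧ c * d = s ∧ c ≠ 0 ∧ d ≠ 0 := by
    set e : ℝ := Real.sqrt ((1 + 2 * r * m) ^ 2 - 4 * s * m ^ 2) with hedef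
    have he : e ^ 2 = (1 + 2 * r * m) ^ 2 - 4 * s * m ^ 2 := Real.sq_sqrt hD
    refine ⟨(-(1 + 2 * r * m) + e) / (2 * m), (-(1 + 2 * r * m) - e) / (2 * m), ?_, ?_, ?_, ?_⟩
    · field_simp
      ring
    · field_simp
      nlinarith [he]
    · intro h
      rw [div_eq_zero_iff] at h
      rcases h with h | h
      · have he' : e = 1 + 2 * r * m := by linarith
        rw [he'] at he
        nlinarith [mul_pos hs (mul_pos hm hm)]
      · nlinarith
    · intro h
      rw [div_eq_zero_iff] at h
      rcases h with h | h
      · have he' : e = -(1 + 2 * r * m) := by linarith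
        rw [he'] at he
        nlinarith [mul_pos hs (mul_pos hm hm)]
      · nlinarith
  have ht1 : IsUnit (A (p + c • (1 : V))) := hsc c hc
  have ht2 : IsUnit (A (p + d • (1 : V))) := hsc d hd
  have ht : IsUnit (A (m • ((p + c • (1 : V)) * (p + d • (1 : V))))) := by
    rw [map_smul, isUnit_smul_iff' hmne, map_mul]
    exact ht1.mul ht2
  have key := hp _ ht
  have hid : p + m • ((p + c • (1 : V)) * (p + d • (1 : V)))
      = m • (p ^ 2 - (2 * r) • p + s • (1 : V)) := by
    rw [pow_two]
    simp only [mul_add, add_mul, smul_add, smul_sub, smul_smul, mul_smul_comm, smul_mul_assoc,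
      smul_mul_smul_comm, one_mul, mul_one]
    match_scalars
    · linear_combination hsum
    · ring
    · linear_combination m * hprod
  rw [hid, map_smul, isUnit_smul_iff' hmne] at key
  exact key
end

section
/- Let V be a unital ring, a an invertible element of V, and q a nonzero quaternion. Then a² - 2Re(q)a + |q|²·1 is invertible in V if and only if a⁻² - (2Re(q)/|q|²)a⁻¹ + (1/|q|²)·1 is invertible in V. Consequently q belongs to the S-spectrum of a if and only if conj(q)/|q|² belongs to the S-spectrum of a⁻¹. -/
open scoped Quaternion

lemma smul_isUnit_iff {V : Type*} [Ring V] [Algebra ℝ V] (r : ℝ) (hr : r ≠ 0) (x : V) :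
    IsUnit (r • x) ↔ IsUnit x := by
  rw [Algebra.smul_def]
  obtain ⟨w, hw⟩ := IsUnit.map (algebraMap ℝ V) (isUnit_iff_ne_zero.2 hr)
  rw [← hw]; exact Units.isUnit_units_mul w x

theorem sSpectrum_inverse {V : Type*} [Ring V] [Algebra ℝ V] (u : Vˣ) (q : ℍ[ℝ]) (hq : q ≠ 0) :
    (IsUnit ((u : V) ^ 2 - (2 * q.re) • (u : V) + (‖q‖ ^ 2) • (1 : V)) ↔
      IsUnit (((u⁻¹ : Vˣ) : V) ^ 2 - (2 * q.re / ‖q‖ ^ 2) • ((u⁻¹ : Vˣ) : V)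
        + (1 / ‖q‖ ^ 2) • (1 : V))) ∧
    (¬ IsUnit ((u : V) ^ 2 - (2 * q.re) • (u : V) + (‖q‖ ^ 2) • (1 : V)) ↔
      ¬ IsUnit (((u⁻¹ : Vˣ) : V) ^ 2
        - (2 * ((‖q‖ ^ 2)⁻¹ • star q).re) • ((u⁻¹ : Vˣ) : V)
        + (‖(‖q‖ ^ 2)⁻¹ • star q‖ ^ 2) • (1 : V))) := by
  have hn : ‖q‖ ≠ 0 := norm_ne_zero_iff.mpr hq
  have hn2 : (‖q‖ : ℝ) ^ 2 ≠ 0 := pow_ne_zero 2 hn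
  set a : V := (u : V)
  set b : V := ((u⁻¹ : Vˣ) : V)
  have hba : b * a = 1 := by simp [a, b, ← Units.val_mul]
  set p : V := a ^ 2 - (2 * q.re) • a + (‖q‖ ^ 2) • (1 : V) with hp
  have key : (‖q‖ ^ 2)⁻¹ • (b ^ 2 * p) =
      b ^ 2 - (2 * q.re / ‖q‖ ^ 2) • b + (1 / ‖q‖ ^ 2) • (1 : V) := by
    have h1 : b ^ 2 * a ^ 2 = 1 := by
      have : b * (b * a) * a = 1 := by rw [hba]; simpa using hba
      simpa [pow_two, mul_assoc] using this
    have h2 : b ^ 2 * a = b := by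
      have : b * (b * a) = b := by rw [hba]; simp
      simpa [pow_two, mul_assoc] using this
    rw [hp, mul_add, mul_sub, h1, mul_smul_comm, h2, mul_smul_comm, mul_one]
    rw [smul_add, smul_sub, smul_smul, smul_smul]
    rw [inv_mul_cancel₀ hn2, one_smul]
    rw [show (‖q‖ ^ 2)⁻¹ * (2 * q.re) = 2 * q.re / ‖q‖ ^ 2 from by ring,
      show ((‖q‖:ℝ) ^ 2)⁻¹ = 1 / ‖q‖ ^ 2 from by ring]
    abel
  have main : IsUnit p ↔
      IsUnit (b ^ 2 - (2 * q.re / ‖q‖ ^ 2) • b + (1 / ‖q‖ ^ 2) • (1 : V)) := by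
    rw [← key, smul_isUnit_iff _ (inv_ne_zero hn2)]
    have := (Units.isUnit_units_mul ((u⁻¹) ^ 2) p).symm
    rwa [show ((↑(u⁻¹ ^ 2) : V)) = b ^ 2 from by push_cast; rfl] at this
  refine ⟨main, ?_⟩
  have hre : ((‖q‖ ^ 2)⁻¹ • star q).re = (‖q‖ ^ 2)⁻¹ * q.re := by simp
  have hnorm : ‖(‖q‖ ^ 2)⁻¹ • star q‖ ^ 2 = 1 / ‖q‖ ^ 2 := by
    rw [norm_smul, norm_star, Real.norm_eq_abs, abs_of_nonneg (by positivity)]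
    field_simp
  have harg : (2 * ((‖q‖ ^ 2)⁻¹ • star q).re) = 2 * q.re / ‖q‖ ^ 2 := by
    rw [hre]; ring
  rw [harg, hnorm]
  exact not_congr main
end

section
/- Let A : V → W be a bounded below unital homomorphism of real unital Banach algebras and a ∈ V. Then the topological boundary of the S-spectrum of a is contained in the Fredholm S-spectrum of a relative to A: ∂σ_S(a) ⊆ σ^Φ_{S,A}(a). -/
open scoped Quaternion
open Filter Topology

theorem boundary_sSpectrum_subset_fredholm {V W : Type*}
    [NormedRing V] [NormedAlgebra ℝ V] [CompleteSpace V]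
    [NormedRing W] [NormedAlgebra ℝ W] [CompleteSpace W]
    (A : V →ₐ[ℝ] W) (hA : ∃ c > (0 : ℝ), ∀ v : V, c * ‖v‖ ≤ ‖A v‖) (a : V) :
    frontier {q : ℍ[ℝ] | ¬ IsUnit (a ^ 2 - (2 * q.re) • a + (‖q‖ ^ 2) • (1 : V))}
      ⊆ {q : ℍ[ℝ] | ¬ IsUnit (A (a ^ 2 - (2 * q.re) • a + (‖q‖ ^ 2) • (1 : V)))} := by
  obtain ⟨c, hc, hbelow⟩ := hA
  set f : ℍ[ℝ] → V := fun q => a ^ 2 - (2 * q.re) • a + (‖q‖ ^ 2) • (1 : V) with hf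
  have hfc : Continuous f := by
    apply Continuous.add
    · exact continuous_const.sub (((continuous_const.mul Quaternion.continuous_re).smul
        continuous_const))
    · exact ((continuous_norm.pow 2).smul continuous_const)
  intro q hq
  simp only [Set.mem_setOf_eq]
  intro hunit
  obtain ⟨u, hu⟩ := hunit
  set w : W := ((u⁻¹ : Wˣ) : W) with hw
  -- q is in the (closed) spectrum and in the closure of its complement
  have hclosed : IsClosed {q : ℍ[ℝ] | ¬ IsUnit (f q)} := by
    have : {q : ℍ[ℝ] | ¬ IsUnit (f q)} = f ⁻¹' {x | IsUnit x}ᶜ := rfl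
    rw [this]
    exact (Units.isOpen.isClosed_compl).preimage hfc
  have hq' : q ∈ closure {q : ℍ[ℝ] | ¬ IsUnit (f q)} ∩
      closure ({q : ℍ[ℝ] | ¬ IsUnit (f q)}ᶜ) := by
    rw [← frontier_eq_closure_inter_closure]; exact hq
  have hqS : ¬ IsUnit (f q) := by
    have := hq'.1
    rwa [hclosed.closure_eq] at this
  have hntV : Nontrivial V := by
    by_contra h
    rw [not_nontrivial_iff_subsingleton] at h
    exact hqS (isUnit_of_subsingleton _)
  have hqC : q ∈ closure {p : ℍ[ℝ] | IsUnit (f p)} := by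
    have h2 := hq'.2
    have : ({q : ℍ[ℝ] | ¬ IsUnit (f q)}ᶜ : Set ℍ[ℝ]) = {p : ℍ[ℝ] | IsUnit (f p)} := by
      ext p; simp
    rwa [this] at h2
  obtain ⟨p, hp, hlim⟩ := mem_closure_iff_seq_limit.mp hqC
  -- the inverses
  set x : ℕ → V := fun n => ((hp n).unit⁻¹ : Vˣ) with hx
  have hfx : ∀ n, f (p n) * x n = 1 := fun n => by
    simpa [hx] using (hp n).unit.mul_inv
  -- decomposition of f q
  set α : ℕ → ℝ := fun n => 2 * (p n).re - 2 * q.re with hα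
  set β : ℕ → ℝ := fun n => ‖q‖ ^ 2 - ‖p n‖ ^ 2 with hβ
  have hdecomp : ∀ n, f q = f (p n) + α n • a + β n • (1 : V) := by
    intro n
    simp only [hf, hα, hβ]
    module
  -- key identity in W
  have hkey : ∀ n, A (x n) = w + α n • (w * (A a * A (x n))) + β n • (w * A (x n)) := by
    intro n
    have h1 : f q * x n = 1 + α n • (a * x n) + β n • x n := by
      rw [hdecomp n, add_mul, add_mul, hfx n, smul_mul_assoc, smul_mul_assoc, one_mul]
    have h2 : A (f q) * A (x n) = 1 + α n • (A a * A (x n)) + β n • A (x n) := by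
      rw [← map_mul, h1]
      simp [map_add, map_smul, map_mul]
    have h3 : w * (A (f q) * A (x n)) = A (x n) := by
      rw [← mul_assoc, hw, ← hu, u.inv_mul, one_mul]
    conv_lhs => rw [← h3]
    rw [h2, mul_add, mul_add, mul_one, mul_smul_comm, mul_smul_comm]
  -- norm bound
  set t : ℕ → ℝ := fun n => ‖A (x n)‖ with ht
  have hbound : ∀ n, t n ≤ ‖w‖ + (|α n| * ‖A a‖ + |β n|) * ‖w‖ * t n := by
    intro n
    calc t n = ‖w + α n • (w * (A a * A (x n))) + β n • (w * A (x n))‖ :=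
          congrArg norm (hkey n)
      _ ≤ ‖w + α n • (w * (A a * A (x n)))‖ + ‖β n • (w * A (x n))‖ := norm_add_le _ _
      _ ≤ ‖w‖ + ‖α n • (w * (A a * A (x n)))‖ + ‖β n • (w * A (x n))‖ := by
          gcongr; exact norm_add_le _ _
      _ ≤ ‖w‖ + |α n| * (‖w‖ * (‖A a‖ * ‖A (x n)‖)) + |β n| * (‖w‖ * ‖A (x n)‖) := by
          gcongr
          · rw [norm_smul, Real.norm_eq_abs]
            gcongr
            exact le_trans (norm_mul_le _ _) (by gcongr; exact norm_mul_le _ _)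
          · rw [norm_smul, Real.norm_eq_abs]
            gcongr
            exact norm_mul_le _ _
      _ = ‖w‖ + (|α n| * ‖A a‖ + |β n|) * ‖w‖ * t n := by ring
  -- t n is eventually large
  have hΔpos : ∀ n, (0 : ℝ) < ‖f q - f (p n)‖ := by
    intro n
    rw [norm_pos_iff]
    intro h0
    exact hqS (by rw [sub_eq_zero.mp h0]; exact hp n)
  have hxlarge : ∀ n, ‖f q - f (p n)‖⁻¹ ≤ ‖x n‖ := by
    intro n
    by_contra h
    push_neg at h
    have hxpos : (0 : ℝ) < ‖x n‖ := Units.norm_pos ((hp n).unit⁻¹)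
    have hΔ : ‖f q - f (p n)‖ < ‖x n‖⁻¹ := by
      have e1 : ‖x n‖ * ‖x n‖⁻¹ = 1 := mul_inv_cancel₀ hxpos.ne'
      have e2 : ‖f q - f (p n)‖ * ‖f q - f (p n)‖⁻¹ = 1 := mul_inv_cancel₀ (hΔpos n).ne'
      nlinarith [hΔpos n, inv_pos.mpr hxpos, inv_pos.mpr (hΔpos n)]
    have hnear : ‖f q - ((hp n).unit : V)‖ < ‖((((hp n).unit)⁻¹ : Vˣ) : V)‖⁻¹ := by
      rw [(hp n).unit_spec]; exact hΔ
    exact hqS (((hp n).unit).ofNearby (f q) hnear).isUnit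
  have htlarge : ∀ n, c * ‖f q - f (p n)‖⁻¹ ≤ t n := fun n =>
    le_trans (mul_le_mul_of_nonneg_left (hxlarge n) hc.le) (hbelow (x n))
  -- limits
  have hΔlim : Tendsto (fun n => ‖f q - f (p n)‖) atTop (𝓝 0) := by
    have : Tendsto (fun n => f q - f (p n)) atTop (𝓝 (f q - f q)) :=
      tendsto_const_nhds.sub ((hfc.tendsto q).comp hlim)
    rw [sub_self] at this
    simpa using this.norm
  have hεlim : Tendsto (fun n => (|α n| * ‖A a‖ + |β n|) * ‖w‖) atTop (𝓝 0) := by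
    have hαlim : Tendsto α atTop (𝓝 0) := by
      have : Tendsto (fun n => 2 * (p n).re - 2 * q.re) atTop (𝓝 (2 * q.re - 2 * q.re)) :=
        (tendsto_const_nhds.mul ((Quaternion.continuous_re.tendsto q).comp hlim)).sub
          tendsto_const_nhds
      simpa [hα, sub_self] using this
    have hβlim : Tendsto β atTop (𝓝 0) := by
      have : Tendsto (fun n => ‖q‖ ^ 2 - ‖p n‖ ^ 2) atTop (𝓝 (‖q‖ ^ 2 - ‖q‖ ^ 2)) :=
        tendsto_const_nhds.sub (((continuous_norm.tendsto q).comp hlim).pow 2)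
      simpa [hβ, sub_self] using this
    have : Tendsto (fun n => (|α n| * ‖A a‖ + |β n|) * ‖w‖) atTop
        (𝓝 ((|(0:ℝ)| * ‖A a‖ + |(0:ℝ)|) * ‖w‖)) :=
      ((hαlim.abs.mul tendsto_const_nhds).add hβlim.abs).mul tendsto_const_nhds
    simpa using this
  -- eventually pick n
  have hev1 : ∀ᶠ n in atTop, (|α n| * ‖A a‖ + |β n|) * ‖w‖ < 1/2 :=
    hεlim.eventually (eventually_lt_nhds (by norm_num))
  have hev2 : ∀ᶠ n in atTop, 2 * ‖w‖ + 1 < t n := by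
    have h1 : ∀ᶠ n in atTop, ‖f q - f (p n)‖ < c / (2 * ‖w‖ + 1) := by
      refine hΔlim.eventually (eventually_lt_nhds ?_)
      positivity
    filter_upwards [h1] with n hn
    have h2 : (2 * ‖w‖ + 1) < c * ‖f q - f (p n)‖⁻¹ := by
      rw [lt_div_iff₀ (by positivity)] at hn
      rw [← div_eq_mul_inv, lt_div_iff₀ (hΔpos n)]
      linarith [hn]
    exact lt_of_lt_of_le h2 (htlarge n)
  obtain ⟨n, h1, h2⟩ := (hev1.and hev2).exists
  have h3 := hbound n
  have htn : (0 : ℝ) ≤ t n := norm_nonneg _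
  nlinarith [norm_nonneg w]
end

section
/- Let V be a real unital Banach algebra, a ∈ V, and q a quaternion in the topological boundary of the S-spectrum σ_S(a). Then there exists a sequence (bₙ) in V with ‖bₙ‖ = 1 for all n such that (a² - 2Re(q)a + |q|²·1)·bₙ → 0 and bₙ·(a² - 2Re(q)a + |q|²·1) → 0. -/
open scoped Quaternion
open Filter

theorem boundary_sSpectrum_approx {V : Type*} [NormedRing V] [NormedAlgebra ℝ V]
    [CompleteSpace V] (a : V) (q : ℍ[ℝ])
    (hq : q ∈ frontier {p : ℍ[ℝ] | ¬ IsUnit (a ^ 2 - (2 * p.re) • a + (‖p‖ ^ 2) • (1 : V))}) :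
    ∃ b : ℕ → V, (∀ n, ‖b n‖ = 1) ∧
      Tendsto (fun n => (a ^ 2 - (2 * q.re) • a + (‖q‖ ^ 2) • (1 : V)) * b n) atTop (nhds 0) ∧
      Tendsto (fun n => b n * (a ^ 2 - (2 * q.re) • a + (‖q‖ ^ 2) • (1 : V))) atTop (nhds 0) := by
  set f : ℍ[ℝ] → V := fun p => a ^ 2 - (2 * p.re) • a + (‖p‖ ^ 2) • (1 : V) with hf
  have hcont : Continuous f := by
    apply Continuous.add
    · exact continuous_const.sub
        ((continuous_const.mul Quaternion.continuous_re).smul continuous_const)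
    · exact (continuous_norm.pow 2).smul continuous_const
  set x := f q with hxdef
  set S := {p : ℍ[ℝ] | ¬ IsUnit (f p)} with hS
  have hSclosed : IsClosed S := by
    have : S = (f ⁻¹' {y : V | IsUnit y})ᶜ := rfl
    rw [this]
    exact (Units.isOpen.preimage hcont).isClosed_compl
  have hx : ¬ IsUnit x := hSclosed.closure_subset (frontier_subset_closure hq)
  have hnt : Nontrivial V := by
    by_contra h
    rw [not_nontrivial_iff_subsingleton] at h
    exact hx (isUnit_of_subsingleton x)
  have hclos : x ∈ closure {y : V | IsUnit y} := by
    have hq2 : q ∈ closure Sᶜ := by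
      rw [frontier_eq_closure_inter_closure] at hq
      exact hq.2
    have := mem_closure_image (hcont.continuousAt (x := q)) hq2
    refine closure_mono ?_ this
    rintro _ ⟨p, hp, rfl⟩
    exact not_not.mp hp
  have key : ∀ n : ℕ, ∃ b : V, ‖b‖ = 1 ∧
      ‖x * b‖ ≤ (1 + ‖(1:V)‖) / (n + 1) ∧ ‖b * x‖ ≤ (1 + ‖(1:V)‖) / (n + 1) := by
    intro n
    have hεpos : (0:ℝ) < 1 / ((n:ℝ) + 1) := by positivity
    obtain ⟨u, hu, hdu⟩ := Metric.mem_closure_iff.mp hclos _ hεpos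
    rw [dist_eq_norm] at hdu
    set c : V := ((hu.unit⁻¹ : Vˣ) : V) with hc
    have huval : (hu.unit : V) = u := hu.unit_spec
    have hcpos : (0:ℝ) < ‖c‖ := Units.norm_pos _
    have hinv : ‖c‖⁻¹ ≤ ‖x - u‖ := by
      by_contra h
      push_neg at h
      refine hx ?_
      have := (Units.ofNearby hu.unit x (by rw [huval]; exact h)).isUnit
      simpa using this
    have huc : u * c = 1 := by rw [← huval]; exact hu.unit.mul_inv
    have hcu : c * u = 1 := by rw [← huval]; exact hu.unit.inv_mul
    have hdu' : ‖x - u‖ ≤ ((n:ℝ) + 1)⁻¹ := by rw [one_div] at hdu; exact hdu.le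
    refine ⟨‖c‖⁻¹ • c, ?_, ?_, ?_⟩
    · rw [norm_smul, norm_inv, norm_norm, inv_mul_cancel₀ hcpos.ne']
    · have hxc : x * c = (x - u) * c + 1 := by
        rw [sub_mul, huc]; abel
      calc ‖x * (‖c‖⁻¹ • c)‖ = ‖c‖⁻¹ * ‖(x - u) * c + 1‖ := by
            rw [mul_smul_comm, hxc, norm_smul, norm_inv, norm_norm]
        _ ≤ ‖c‖⁻¹ * (‖x - u‖ * ‖c‖ + ‖(1:V)‖) := by
            gcongr
            refine (norm_add_le _ _).trans ?_
            gcongr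
            all_goals exact norm_mul_le _ _
        _ = ‖x - u‖ + ‖c‖⁻¹ * ‖(1:V)‖ := by field_simp; try ring
        _ ≤ ‖x - u‖ + ‖x - u‖ * ‖(1:V)‖ := by gcongr
        _ ≤ (1 + ‖(1:V)‖) / ((n:ℝ) + 1) := by
            rw [div_eq_mul_inv]
            nlinarith [norm_nonneg (1:V), norm_nonneg (x - u), hεpos]
    · have hxc : c * x = c * (x - u) + 1 := by
        rw [mul_sub, hcu]; abel
      calc ‖(‖c‖⁻¹ • c) * x‖ = ‖c‖⁻¹ * ‖c * (x - u) + 1‖ := by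
            rw [smul_mul_assoc, hxc, norm_smul, norm_inv, norm_norm]
        _ ≤ ‖c‖⁻¹ * (‖c‖ * ‖x - u‖ + ‖(1:V)‖) := by
            gcongr
            refine (norm_add_le _ _).trans ?_
            gcongr
            all_goals exact norm_mul_le _ _
        _ = ‖x - u‖ + ‖c‖⁻¹ * ‖(1:V)‖ := by field_simp; try ring
        _ ≤ ‖x - u‖ + ‖x - u‖ * ‖(1:V)‖ := by gcongr
        _ ≤ (1 + ‖(1:V)‖) / ((n:ℝ) + 1) := by
            rw [div_eq_mul_inv]
            nlinarith [norm_nonneg (1:V), norm_nonneg (x - u), hεpos]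
  choose b hb1 hb2 hb3 using key
  have hlim : Tendsto (fun n : ℕ => (1 + ‖(1:V)‖) / ((n:ℝ) + 1)) atTop (nhds 0) := by
    have h1 : Tendsto (fun n : ℕ => (1:ℝ) / ((n:ℝ) + 1)) atTop (nhds 0) :=
      tendsto_one_div_add_atTop_nhds_zero_nat
    have := h1.const_mul (1 + ‖(1:V)‖)
    simpa [div_eq_mul_inv, mul_comm, mul_assoc, mul_left_comm] using this
  exact ⟨b, hb1, squeeze_zero_norm hb2 hlim, squeeze_zero_norm hb3 hlim⟩
end

section
/- Let V be a real unital Banach algebra and v ∈ V. Define the boundary S-spectrum B_{S,∂}(v) = {q ∈ ℍ : v² - 2Re(q)v + |q|²·1 ∈ ∂(V \ V⁻¹)}, where V⁻¹ denotes the group of invertible elements and ∂ the topological boundary. Then ∂σ_S(v) ⊆ B_{S,∂}(v) ⊆ σ_S(v); in particular B_{S,∂}(v) is a nonempty compact set whenever σ_S(v) is nonempty and compact. -/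
open scoped Quaternion

theorem boundary_sSpectrum_inclusions {V : Type*} [NormedRing V] [NormedAlgebra ℝ V]
    [CompleteSpace V] (v : V) :
    let σ : Set ℍ[ℝ] := {q | ¬ IsUnit (v ^ 2 - (2 * q.re) • v + (‖q‖ ^ 2) • (1 : V))}
    let B : Set ℍ[ℝ] :=
      {q | (v ^ 2 - (2 * q.re) • v + (‖q‖ ^ 2) • (1 : V)) ∈ frontier {x : V | ¬ IsUnit x}}
    frontier σ ⊆ B ∧ B ⊆ σ ∧ (σ.Nonempty → IsCompact σ → B.Nonempty ∧ IsCompact B) := by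
  intro σ B
  set f : ℍ[ℝ] → V := fun q => v ^ 2 - (2 * q.re) • v + (‖q‖ ^ 2) • (1 : V) with hf
  have hfc : Continuous f := by
    apply Continuous.add
    · exact continuous_const.sub
        (((continuous_const.mul (Quaternion.continuous_re)).smul continuous_const))
    · exact ((continuous_norm.pow 2).smul continuous_const)
  have hclosed : IsClosed {x : V | ¬ IsUnit x} := by
    have := Units.isOpen (R := V)
    simpa [Set.compl_setOf] using this.isClosed_compl
  have hσ : σ = f ⁻¹' {x : V | ¬ IsUnit x} := rfl
  have hσclosed : IsClosed σ := hσ ▸ hclosed.preimage hfc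
  have hBσ : B ⊆ σ := by
    intro q hq
    have : f q ∈ frontier {x : V | ¬ IsUnit x} := hq
    exact frontier_subset_closure.trans hclosed.closure_subset this
  have hfrB : frontier σ ⊆ B := by
    intro q hq
    have hqσ : q ∈ σ := hσclosed.closure_subset hq.1
    constructor
    · exact subset_closure hqσ
    · intro hint
      apply hq.2
      have : q ∈ f ⁻¹' interior {x : V | ¬ IsUnit x} := hint
      have hopen : IsOpen (f ⁻¹' interior {x : V | ¬ IsUnit x}) :=
        isOpen_interior.preimage hfc
      have hsub : f ⁻¹' interior {x : V | ¬ IsUnit x} ⊆ σ := by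
        intro p hp
        have h2 : f p ∈ {x : V | ¬ IsUnit x} := interior_subset (Set.mem_preimage.mp hp)
        exact h2
      exact interior_maximal hsub hopen this
  refine ⟨hfrB, hBσ, fun hne hcpt => ?_⟩
  have hBclosed : IsClosed B :=
    (isClosed_frontier.preimage hfc : IsClosed (f ⁻¹' frontier {x : V | ¬ IsUnit x}))
  have hBcpt : IsCompact B := hcpt.of_isClosed_subset hBclosed hBσ
  refine ⟨?_, hBcpt⟩
  have hfr : (frontier σ).Nonempty := by
    by_contra h
    rw [Set.not_nonempty_iff_eq_empty] at h
    have hclopen : IsClopen σ := isClopen_iff_frontier_eq_empty.mpr h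
    rcases (isClopen_iff.mp hclopen) with h1 | h1
    · exact hne.ne_empty h1
    · rw [h1] at hcpt
      exact noncompact_univ ℍ[ℝ] hcpt
  exact hfr.mono hfrB
end

section
/- Let V be a real unital Banach algebra and v an invertible element of V. Then for every nonzero quaternion q, the identity v² - 2Re(q)v + |q|²·1 = |q|²·(v⁻² - (2Re(q)/|q|²)v⁻¹ + (1/|q|²)·1)·v² holds; consequently q belongs to the boundary S-spectrum B_{S,∂}(v) if and only if conj(q)/|q|² belongs to B_{S,∂}(v⁻¹). -/
open scoped Quaternion

theorem boundary_sSpectrum_inverse {V : Type*} [NormedRing V] [NormedAlgebra ℝ V]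
    (u : Vˣ) (q : ℍ[ℝ]) (hq : q ≠ 0) :
    ((u : V) ^ 2 - (2 * q.re) • (u : V) + (‖q‖ ^ 2) • (1 : V)
      = (‖q‖ ^ 2) • ((((u⁻¹ : Vˣ) : V) ^ 2 - (2 * q.re / ‖q‖ ^ 2) • ((u⁻¹ : Vˣ) : V)
          + (‖q‖ ^ 2)⁻¹ • (1 : V)) * (u : V) ^ 2)) ∧
    (((u : V) ^ 2 - (2 * q.re) • (u : V) + (‖q‖ ^ 2) • (1 : V))
        ∈ frontier {x : V | ¬ IsUnit x} ↔
      (((u⁻¹ : Vˣ) : V) ^ 2 - (2 * ((‖q‖ ^ 2)⁻¹ • star q).re) • ((u⁻¹ : Vˣ) : V)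
          + (‖(‖q‖ ^ 2)⁻¹ • star q‖ ^ 2) • (1 : V))
        ∈ frontier {x : V | ¬ IsUnit x}) := by
  have hn : ‖q‖ ≠ 0 := norm_ne_zero_iff.mpr hq
  have hn2 : (‖q‖ : ℝ) ^ 2 ≠ 0 := pow_ne_zero _ hn
  -- basic unit facts
  have hinv2 : (((u⁻¹ : Vˣ) : V)) ^ 2 * ((u : V)) ^ 2 = 1 := by
    rw [← Units.val_pow_eq_pow_val, ← Units.val_pow_eq_pow_val, ← Units.val_mul,
      show (u⁻¹ ^ 2 * u ^ 2 : Vˣ) = 1 from by group, Units.val_one]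
  have hinv2' : ((u : V)) ^ 2 * (((u⁻¹ : Vˣ) : V)) ^ 2 = 1 := by
    rw [← Units.val_pow_eq_pow_val, ← Units.val_pow_eq_pow_val, ← Units.val_mul,
      show (u ^ 2 * u⁻¹ ^ 2 : Vˣ) = 1 from by group, Units.val_one]
  have hinv1 : (((u⁻¹ : Vˣ) : V)) * ((u : V)) ^ 2 = (u : V) := by
    rw [sq, ← mul_assoc, Units.inv_mul, one_mul]
  -- Part 1 : the algebraic identity
  have key : (u : V) ^ 2 - (2 * q.re) • (u : V) + (‖q‖ ^ 2) • (1 : V)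
      = (‖q‖ ^ 2) • ((((u⁻¹ : Vˣ) : V) ^ 2 - (2 * q.re / ‖q‖ ^ 2) • ((u⁻¹ : Vˣ) : V)
          + (‖q‖ ^ 2)⁻¹ • (1 : V)) * (u : V) ^ 2) := by
    rw [add_mul, sub_mul, smul_mul_assoc, smul_mul_assoc, one_mul, hinv1, hinv2,
      smul_add, smul_sub, smul_smul, smul_smul]
    rw [mul_div_cancel₀ _ hn2, mul_inv_cancel₀ hn2]
    module
  refine ⟨key, ?_⟩
  -- rewrite the re and norm of the scaled conjugate
  have hre : ((‖q‖ ^ 2)⁻¹ • star q).re = (‖q‖ ^ 2)⁻¹ * q.re := by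
    simp [Quaternion.re_smul, Quaternion.re_star, smul_eq_mul]
  have hnrm : ‖(‖q‖ ^ 2)⁻¹ • star q‖ = ‖q‖⁻¹ := by
    rw [norm_smul, norm_star, Real.norm_eq_abs, abs_of_nonneg (by positivity)]
    field_simp
  have hre2 : 2 * ((‖q‖ ^ 2)⁻¹ • star q).re = 2 * q.re / ‖q‖ ^ 2 := by
    rw [hre]; ring
  have hnrm2 : ‖(‖q‖ ^ 2)⁻¹ • star q‖ ^ 2 = (‖q‖ ^ 2)⁻¹ := by
    rw [hnrm, inv_pow]
  rw [hre2, hnrm2, key]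
  set w : V := (((u⁻¹ : Vˣ) : V) ^ 2 - (2 * q.re / ‖q‖ ^ 2) • ((u⁻¹ : Vˣ) : V)
      + (‖q‖ ^ 2)⁻¹ • (1 : V)) with hw
  -- the homeomorphism x ↦ ‖q‖² • (x * u²)
  let cu : Vˣ := Units.map (algebraMap ℝ V : ℝ →* V) (Units.mk0 (‖q‖ ^ 2) hn2)
  have hcu : (cu : V) = algebraMap ℝ V (‖q‖ ^ 2) := rfl
  let e : V ≃ₜ V :=
    { toFun := fun x => (‖q‖ ^ 2) • (x * ((u : V)) ^ 2)
      invFun := fun y => (‖q‖ ^ 2)⁻¹ • (y * (((u⁻¹ : Vˣ) : V)) ^ 2)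
      left_inv := by
        intro x
        simp only [smul_mul_assoc, smul_smul, inv_mul_cancel₀ hn2, one_smul,
          mul_assoc]
        rw [hinv2', mul_one]
      right_inv := by
        intro y
        simp only [smul_mul_assoc, smul_smul, mul_inv_cancel₀ hn2, one_smul,
          mul_assoc]
        rw [hinv2, mul_one]
      continuous_toFun := by fun_prop
      continuous_invFun := by fun_prop }
  have hpre : e ⁻¹' {x : V | ¬ IsUnit x} = {x : V | ¬ IsUnit x} := by
    ext x
    simp only [Set.mem_preimage, Set.mem_setOf_eq]
    have : IsUnit ((‖q‖ ^ 2) • (x * ((u : V)) ^ 2)) ↔ IsUnit x := by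
      rw [Algebra.smul_def, ← hcu, Units.isUnit_units_mul, ← Units.val_pow_eq_pow_val,
        Units.isUnit_mul_units]
    exact not_congr this
  have : (‖q‖ ^ 2) • (w * (u : V) ^ 2) = e w := rfl
  rw [this]
  constructor
  · intro h
    have := (Set.mem_preimage).mpr h
    rw [e.preimage_frontier, hpre] at this
    exact this
  · intro h
    have : w ∈ e ⁻¹' (frontier {x : V | ¬ IsUnit x}) := by
      rw [e.preimage_frontier, hpre]; exact h
    exact this
end
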